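/- There exists a function g : ℕ → ℕ which is congruence preserving on ⟨ℕ;+⟩ but is not monotone non-decreasing. -/
import Mathlib


/-- `r` is an additive congruence on ℕ: an equivalence relation compatible with `+`. -/
def IsAddCongN (r : ℕ → ℕ → Prop) : Prop :=
  Equivalence r ∧ ∀ x y x' y', r x y → r x' y' → r (x + x') (y + y')

/-- `g` is congruence preserving on ⟨ℕ;+⟩. -/
def CongPresN (g : ℕ → ℕ) : Prop :=
  ∀ r : ℕ → ℕ → Prop, IsAddCongN r → ∀ x y, r x y → r (g x) (g y)

lemma congPres_of_dvd (g : ℕ → ℕ) (hg : ∀ n, n ≤ g n)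
    (hdvd : ∀ a b : ℕ, a ≤ b → ((b : ℤ) - a) ∣ ((g b : ℤ) - g a)) : CongPresN g := by
  intro r hr x y hxy
  obtain ⟨heq, hadd⟩ := hr
  suffices H : ∀ x y, r x y → x ≤ y → r (g x) (g y) by
    rcases le_total x y with h | h
    · exact H x y hxy h
    · exact heq.symm (H y x (heq.symm hxy) h)
  intro x y hxy hle
  rcases eq_or_lt_of_le hle with rfl | hlt
  · exact heq.refl _
  set k := y - x with hk
  have hkpos : 0 < k := by omega
  have step : ∀ z, x ≤ z → r z (z + k) := by
    intro z hz
    have h1 : r (z - x + x) (z - x + y) := hadd _ _ _ _ (heq.refl (z - x)) hxy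
    have e1 : z - x + x = z := by omega
    have e2 : z - x + y = z + k := by omega
    rwa [e1, e2] at h1
  have chain : ∀ m z, x ≤ z → r z (z + m * k) := by
    intro m
    induction m with
    | zero => intro z hz; simpa using heq.refl z
    | succ n ih =>
      intro z hz
      have h1 := ih z hz
      have h2 := step (z + n * k) (by omega)
      have e : z + (n + 1) * k = z + n * k + k := by ring
      rw [e]
      exact heq.trans h1 h2
  have hdk : (k : ℤ) ∣ ((g y : ℤ) - g x) := by
    have := hdvd x y hle
    have e : ((y : ℤ) - x) = (k : ℤ) := by push_cast [hk]; omega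
    rwa [e] at this
  rcases le_total (g x) (g y) with h | h
  · have hdn : k ∣ (g y - g x) := by
      have h1 : (k : ℤ) ∣ ((g y - g x : ℕ) : ℤ) := by rwa [Int.ofNat_sub h]
      exact_mod_cast h1
    obtain ⟨m, hm⟩ := hdn
    have e : g y = g x + m * k := by rw [mul_comm]; omega
    rw [e]
    exact chain m (g x) (hg x)
  · have hdk2 : (k : ℤ) ∣ ((g x : ℤ) - g y) := dvd_sub_comm.mp hdk
    have hdn : k ∣ (g x - g y) := by
      have h1 : (k : ℤ) ∣ ((g x - g y : ℕ) : ℤ) := by rwa [Int.ofNat_sub h]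
      exact_mod_cast h1
    obtain ⟨m, hm⟩ := hdn
    have e : g x = g y + m * k := by rw [mul_comm]; omega
    have hxgy : x ≤ g y := le_trans (le_of_lt hlt) (hg y)
    have h2 := chain m (g y) hxgy
    rw [← e] at h2
    exact heq.symm h2

theorem stmt4 : ∃ g : ℕ → ℕ, CongPresN g ∧ ¬ Monotone g := by
  refine ⟨fun n => 2 * n ^ 2 + 12 - 9 * n, ?_, ?_⟩
  · have hge : ∀ n : ℕ, 9 * n ≤ 2 * n ^ 2 + 12 := by
      intro n
      rcases le_or_gt n 4 with h | h
      · interval_cases n <;> norm_num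
      · nlinarith
    apply congPres_of_dvd
    · intro n
      have := hge n
      rcases le_or_gt n 4 with h | h
      · interval_cases n <;> norm_num
      · have : 10 * n ≤ 2 * n ^ 2 + 12 := by nlinarith
        omega
    · intro a b hab
      have ea : ((2 * a ^ 2 + 12 - 9 * a : ℕ) : ℤ) = 2 * (a : ℤ) ^ 2 + 12 - 9 * a := by
        have := hge a
        push_cast [Nat.cast_sub this]
        ring
      have eb : ((2 * b ^ 2 + 12 - 9 * b : ℕ) : ℤ) = 2 * (b : ℤ) ^ 2 + 12 - 9 * b := by
        have := hge b
        push_cast [Nat.cast_sub this]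
        ring
      simp only [ea, eb]
      exact ⟨2 * ((b : ℤ) + a) - 9, by ring⟩
  · intro h
    have := h (show (0 : ℕ) ≤ 1 by norm_num)
    norm_num at this
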